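/- Let A be the n×n lower triangular Toeplitz matrix over a PID as above, with submatrices A_c. Then for all 1 ≤ k ≤ c ≤ n/2, the ideal generated by the k×k minors of A_c equals the ideal generated by the k×k minors of A_k. -/

import Mathlib

/-!
Put `x m = h (m + 1)`. The minor of `A_c` on rows `f` and columns `g` is the Hankel determinant
`D(u, v) = det [x (u a + v b)]` with `u a = n - c - f a ∈ [0, n - c]` and `v b = g b ∈ [0, c - 1]`.
So both ideals are spanned by Hankel determinants with indices in a box `[0, P] × [0, Q]` with
`P + Q = n - 1`, and it suffices to show that for `k ≤ P + 1`, `k ≤ Q + 1` these span the ideal of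
all `D(u, v)` with `u a + v b ≤ P + Q`.

The tool is the exchange identity `∑_{#A = m} D(u + 1_A, v) = ∑_{#B = m} D(u, v + 1_B)`. If the
increasing column indices `v` have a gap above position `j`, lowering the block above `j` by one and
applying the identity expresses `D(u, v)` through determinants whose column indices have smaller
binary weight `∑ 2 ^ v b`. This squeezes the columns into a window of width `Q`, then (keeping the
columns in that window) the rows into a window of width `P`; a translation `u + s`, `v - s` then
moves both into the box.
-/

open Matrix

/-- The `n × n` lower triangular Toeplitz matrix with `T(i,j) = h_{n-i+j}` for `i ≥ j`
(1-indexed), `0` otherwise. -/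
def Toep {R : Type*} [CommRing R] (n : ℕ) (h : ℕ → R) : Matrix (Fin n) (Fin n) R :=
  Matrix.of fun i j => if (j : ℕ) ≤ (i : ℕ) then h (n - ((i : ℕ) + 1) + ((j : ℕ) + 1)) else 0

/-- The `(n-c+1) × c` submatrix `A_c` of the Toeplitz matrix, on columns `1,…,c` and
rows `c,…,n` (1-indexed). -/
def Ac {R : Type*} [CommRing R] (n : ℕ) (h : ℕ → R) (c : ℕ) (hc1 : 1 ≤ c) (hcn : c ≤ n) :
    Matrix (Fin (n - c + 1)) (Fin c) R :=
  (Toep n h).submatrix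
    (fun i => ⟨c - 1 + (i : ℕ), by have := i.isLt; omega⟩)
    (fun j => ⟨(j : ℕ), by have := j.isLt; omega⟩)

/-- The set of `k × k` minors of a matrix. -/
def minorsSet {R : Type*} [CommRing R] {p q : ℕ} (M : Matrix (Fin p) (Fin q) R) (k : ℕ) :
    Set R :=
  {x | ∃ (f : Fin k → Fin p) (g : Fin k → Fin q),
    StrictMono f ∧ StrictMono g ∧ x = (M.submatrix f g).det}

open Finset Equiv

section

variable {R : Type*} [CommRing R] {k : ℕ}

def hankelDet (x : ℕ → R) (u v : Fin k → ℕ) : R :=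
  (Matrix.of fun a b => x (u a + v b)).det

def hankelIdeal (x : ℕ → R) (k N : ℕ) : Ideal R :=
  Ideal.span {d | ∃ u v : Fin k → ℕ, (∀ a b, u a + v b ≤ N) ∧ hankelDet x u v = d}

def boxHankelDets (x : ℕ → R) (k P Q : ℕ) : Set R :=
  {d | ∃ u v : Fin k → ℕ, (∀ a, u a ≤ P) ∧ (∀ b, v b ≤ Q) ∧ hankelDet x u v = d}

def bump (u : Fin k → ℕ) (A : Finset (Fin k)) : Fin k → ℕ :=
  fun a => u a + if a ∈ A then 1 else 0

def lowerTop (v : Fin k → ℕ) (j : Fin k) : Fin k → ℕ :=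
  fun b => if j < b then v b - 1 else v b

def binWeight (v : Fin k → ℕ) : ℕ :=
  ∑ b, 2 ^ v b

section HankelDet

variable (x : ℕ → R)

theorem hankelDet_comm (u v : Fin k → ℕ) : hankelDet x u v = hankelDet x v u := by
  rw [hankelDet, ← det_transpose]
  congr 1
  ext a b
  simp [add_comm]

theorem hankelDet_congr {u v u' v' : Fin k → ℕ} (h : ∀ a b, u a + v b = u' a + v' b) :
    hankelDet x u v = hankelDet x u' v' := by
  simp only [hankelDet, h]

theorem hankelDet_comp_perm_left (σ : Perm (Fin k)) (u v : Fin k → ℕ) :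
    hankelDet x (u ∘ σ) v = ((Perm.sign σ : ℤ) : R) * hankelDet x u v :=
  det_permute σ (Matrix.of fun a b => x (u a + v b))

theorem hankelDet_comp_perm_right (τ : Perm (Fin k)) (u v : Fin k → ℕ) :
    hankelDet x u (v ∘ τ) = ((Perm.sign τ : ℤ) : R) * hankelDet x u v := by
  rw [hankelDet_comm, hankelDet_comp_perm_left, hankelDet_comm]

theorem isUnit_sign_cast (σ : Perm (Fin k)) : IsUnit ((Perm.sign σ : ℤ) : R) :=
  (Perm.sign σ).isUnit.map (Int.castRingHom R)

theorem hankelDet_eq_zero_of_not_injective_left {u : Fin k → ℕ} (hu : ¬ Function.Injective u)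
    (v : Fin k → ℕ) : hankelDet x u v = 0 := by
  obtain ⟨a, a', huu, hne⟩ := Function.not_injective_iff.mp hu
  exact det_zero_of_row_eq hne (funext fun b => by simp [huu])

theorem hankelDet_eq_zero_of_not_injective_right (u : Fin k → ℕ) {v : Fin k → ℕ}
    (hv : ¬ Function.Injective v) : hankelDet x u v = 0 := by
  rw [hankelDet_comm, hankelDet_eq_zero_of_not_injective_left x hv]

theorem hankelDet_mem_of_sorted {I : Ideal R} {u v : Fin k → ℕ}
    (H : ∀ σ τ : Perm (Fin k), StrictMono (u ∘ σ) → StrictMono (v ∘ τ) →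
      hankelDet x (u ∘ σ) (v ∘ τ) ∈ I) :
    hankelDet x u v ∈ I := by
  by_cases hu : Function.Injective u
  swap
  · rw [hankelDet_eq_zero_of_not_injective_left x hu]
    exact I.zero_mem
  by_cases hv : Function.Injective v
  swap
  · rw [hankelDet_eq_zero_of_not_injective_right x u hv]
    exact I.zero_mem
  have hsorted := H (Tuple.sort u) (Tuple.sort v)
    ((Tuple.monotone_sort u).strictMono_of_injective (hu.comp (Tuple.sort u).injective))
    ((Tuple.monotone_sort v).strictMono_of_injective (hv.comp (Tuple.sort v).injective))
  rwa [hankelDet_comp_perm_left, hankelDet_comp_perm_right, I.unit_mul_mem_iff_mem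
    (isUnit_sign_cast _), I.unit_mul_mem_iff_mem (isUnit_sign_cast _)] at hsorted

-- In the Leibniz expansion, the term of `σ` with the rows `A` raised is the term of `σ` with
-- the columns `σ A` raised.
theorem sum_hankelDet_bump_left_eq_right (u v : Fin k → ℕ) (m : ℕ) :
    ∑ A ∈ powersetCard m univ, hankelDet x (bump u A) v
      = ∑ B ∈ powersetCard m univ, hankelDet x u (bump v B) := by
  simp only [hankelDet, det_apply]
  rw [sum_comm, sum_comm (s := powersetCard m univ)]
  refine sum_congr rfl fun σ _ => ?_
  rw [← smul_sum, ← smul_sum]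
  congr 1
  refine sum_nbij' (fun A => A.map σ.symm.toEmbedding) (fun B => B.map σ.toEmbedding)
    ?_ ?_ ?_ ?_ ?_
  · intro A hA
    simpa [mem_powersetCard] using hA
  · intro B hB
    simpa [mem_powersetCard] using hB
  · intro A _
    ext a
    simp
  · intro B _
    ext b
    simp
  · intro A _
    refine prod_congr rfl fun i _ => ?_
    simp only [bump, of_apply, mem_map_equiv, symm_symm]
    congr 1
    split_ifs <;> omega

end HankelDet

section Gap

variable {v : Fin k → ℕ} {j : Fin k}

theorem bump_lowerTop_Ioi (hv : StrictMono v) (j : Fin k) : bump (lowerTop v j) (Ioi j) = v := by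
  funext b
  simp only [bump, lowerTop, mem_Ioi]
  split_ifs with h
  · have := hv h
    omega
  · rfl

theorem hankelDet_eq_sub_of_strictMono (x : ℕ → R) (u : Fin k → ℕ) (hv : StrictMono v)
    (j : Fin k) :
    hankelDet x u v
      = ∑ A ∈ powersetCard (k - 1 - j) univ, hankelDet x (bump u A) (lowerTop v j)
        - ∑ B ∈ (powersetCard (k - 1 - j) univ).erase (Ioi j),
            hankelDet x u (bump (lowerTop v j) B) := by
  have hIoi : Ioi j ∈ powersetCard (k - 1 - j) univ :=
    mem_powersetCard.mpr ⟨subset_univ _, Fin.card_Ioi j⟩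
  rw [sum_hankelDet_bump_left_eq_right, ← add_sum_erase _ _ hIoi, bump_lowerTop_Ioi hv]
  ring

theorem hankelDet_mem_of_lowerTop {I : Ideal R} (x : ℕ → R) {u : Fin k → ℕ}
    (hv : StrictMono v) (j : Fin k)
    (h₁ : ∀ A, hankelDet x (bump u A) (lowerTop v j) ∈ I)
    (h₂ : ∀ B ∈ (powersetCard (k - 1 - j) univ).erase (Ioi j),
      hankelDet x u (bump (lowerTop v j) B) ∈ I) :
    hankelDet x u v ∈ I := by
  rw [hankelDet_eq_sub_of_strictMono x u hv j]
  exact I.sub_mem (I.sum_mem fun A _ => h₁ A) (I.sum_mem h₂)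

theorem binWeight_comp_perm (v : Fin k → ℕ) (σ : Perm (Fin k)) :
    binWeight (v ∘ σ) = binWeight v :=
  sum_comp σ fun b => 2 ^ v b

theorem binWeight_bump (w : Fin k → ℕ) (B : Finset (Fin k)) :
    binWeight (bump w B) = binWeight w + ∑ b ∈ B, 2 ^ w b := by
  have hterm : ∀ b, 2 ^ bump w B b = 2 ^ w b + if b ∈ B then 2 ^ w b else 0 := by
    intro b
    simp only [bump]
    split_ifs <;> ring
  simp only [binWeight, hterm, sum_add_distrib, sum_ite_mem, univ_inter]

theorem binWeight_lowerTop_lt (hv : StrictMono v) (hj : (Ioi j).Nonempty) :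
    binWeight (lowerTop v j) < binWeight v := by
  conv_rhs => rw [← bump_lowerTop_Ioi hv j, binWeight_bump]
  have := sum_pos (fun b _ => Nat.two_pow_pos (lowerTop v j b)) hj
  omega

theorem lowerTop_strictMono (hv : StrictMono v) (hgap : ∀ b, j < b → v j + 1 < v b) :
    StrictMono (lowerTop v j) := by
  intro b b' hbb'
  have := hv hbb'
  simp only [lowerTop]
  split_ifs with h h' h''
  · have := hv h
    omega
  · exact absurd (h.trans hbb') h'
  · have := hgap b' h''
    have := hv.monotone (not_lt.mp h)
    omega
  · exact this

-- The indices of `B` below `j` contribute distinct powers of two, all smaller than the one of a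
-- missing index of the top block.
theorem sum_two_pow_lt_sum_Ioi {w : Fin k → ℕ} (hw : StrictMono w) {B : Finset (Fin k)}
    (hB : B ≠ Ioi j) (hcard : #B = #(Ioi j)) :
    ∑ b ∈ B, 2 ^ w b < ∑ b ∈ Ioi j, 2 ^ w b := by
  obtain ⟨b₀, hb₀, hb₀B⟩ : ∃ b₀ ∈ Ioi j, b₀ ∉ B := by
    by_contra! h
    exact hB (eq_of_subset_of_card_le h hcard.le).symm
  have hlow : ∑ b ∈ B \ Ioi j, 2 ^ w b < 2 ^ w b₀ := by
    rw [← sum_image hw.injective.injOn]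
    refine Nat.geomSum_lt le_rfl ?_
    simp only [mem_image, mem_sdiff, mem_Ioi, not_lt]
    rintro _ ⟨b, ⟨-, hbj⟩, rfl⟩
    exact hw (hbj.trans_lt (mem_Ioi.mp hb₀))
  have hhigh : 2 ^ w b₀ ≤ ∑ b ∈ Ioi j \ B, 2 ^ w b :=
    single_le_sum (f := fun b => 2 ^ w b) (fun _ _ => Nat.zero_le _) (mem_sdiff.mpr ⟨hb₀, hb₀B⟩)
  rw [← sum_inter_add_sum_sdiff B (Ioi j), ← sum_inter_add_sum_sdiff (Ioi j) B, inter_comm]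
  omega

theorem binWeight_bump_lowerTop_lt (hv : StrictMono v) (hgap : ∀ b, j < b → v j + 1 < v b)
    {B : Finset (Fin k)} (hB : B ∈ (powersetCard (k - 1 - j) univ).erase (Ioi j)) :
    binWeight (bump (lowerTop v j) B) < binWeight v := by
  obtain ⟨hne, hB⟩ := mem_erase.mp hB
  have hcard : #B = #(Ioi j) := by rw [(mem_powersetCard.mp hB).2, Fin.card_Ioi]
  have := sum_two_pow_lt_sum_Ioi (lowerTop_strictMono hv hgap) hne hcard
  conv_rhs => rw [← bump_lowerTop_Ioi hv j]
  rw [binWeight_bump, binWeight_bump]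
  omega

theorem bump_le (u : Fin k → ℕ) (A : Finset (Fin k)) (a : Fin k) : bump u A a ≤ u a + 1 := by
  simp only [bump]
  split_ifs <;> omega

theorem exists_lowerTop_lt (hv : StrictMono v) (hj : (Ioi j).Nonempty) (b : Fin k) :
    ∃ b', lowerTop v j b < v b' := by
  by_cases hb : j < b
  · refine ⟨b, ?_⟩
    have := hv hb
    simp only [lowerTop, if_pos hb]
    omega
  · obtain ⟨b', hb'⟩ := hj
    refine ⟨b', ?_⟩
    simp only [lowerTop, if_neg hb]
    exact hv ((not_lt.mp hb).trans_lt (mem_Ioi.mp hb'))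

theorem bump_add_lowerTop_le {N : ℕ} {u : Fin k → ℕ} (hv : StrictMono v) (hj : (Ioi j).Nonempty)
    (huv : ∀ a b, u a + v b ≤ N) (A : Finset (Fin k)) (a b : Fin k) :
    bump u A a + lowerTop v j b ≤ N := by
  obtain ⟨b', hb'⟩ := exists_lowerTop_lt hv hj b
  have := bump_le u A a
  have := huv a b'
  omega

theorem add_bump_lowerTop_le {N : ℕ} {u : Fin k → ℕ} (hv : StrictMono v) (hj : (Ioi j).Nonempty)
    (huv : ∀ a b, u a + v b ≤ N) (B : Finset (Fin k)) (a b : Fin k) :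
    u a + bump (lowerTop v j) B b ≤ N := by
  obtain ⟨b', hb'⟩ := exists_lowerTop_lt hv hj b
  have := bump_le (lowerTop v j) B b
  have := huv a b'
  omega

theorem exists_gap {Q : ℕ} (hv : StrictMono v) (hQ : k ≤ Q + 1)
    (hspread : ¬ ∀ b b', v b ≤ v b' + Q) :
    ∃ j : Fin k, (Ioi j).Nonempty ∧ ∀ b, j < b → v j + 1 < v b := by
  by_contra! hng
  refine hspread fun b b' => ?_
  have hstep : ∀ i (hi : i + 1 < k), v ⟨i + 1, hi⟩ ≤ v ⟨i, by omega⟩ + 1 := by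
    intro i hi
    obtain ⟨b, hb, hvb⟩ := hng ⟨i, by omega⟩ ⟨⟨i + 1, hi⟩, by simp⟩
    have := hv.monotone (show (⟨i + 1, hi⟩ : Fin k) ≤ b from Fin.mk_le_of_le_val hb)
    omega
  have hlin : ∀ d (hd : b' + d < k), v ⟨b' + d, hd⟩ ≤ v b' + d := by
    intro d
    induction d with
    | zero => simp
    | succ d ih =>
      intro hd
      have h₁ : v ⟨b' + (d + 1), hd⟩ ≤ v ⟨b' + d, by omega⟩ + 1 := hstep (b' + d) (by omega)
      have := ih (by omega)
      omega
  rcases le_or_gt b b' with h | h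
  · have := hv.monotone h
    omega
  · have := hlin (b - b') (by omega)
    have e : (⟨b' + (b - b'), by omega⟩ : Fin k) = b := Fin.ext (Nat.add_sub_of_le h.le)
    rw [e] at this
    omega

end Gap

section Reduction

variable {I : Ideal R} {x : ℕ → R} {P Q : ℕ}

theorem hankelDet_mem_of_spreads_le (hbox : boxHankelDets x k P Q ⊆ I)
    {u v : Fin k → ℕ} (hus : ∀ a a', u a ≤ u a' + P) (hvs : ∀ b b', v b ≤ v b' + Q)
    (huv : ∀ a b, u a + v b ≤ P + Q) :
    hankelDet x u v ∈ I := by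
  set U := univ.sup u
  set V := univ.sup v
  have hU : ∀ a, u a ≤ U := fun a => le_sup (mem_univ a)
  have hV : ∀ b, v b ≤ V := fun b => le_sup (mem_univ b)
  have hU' : ∀ a, U ≤ u a + P := fun a => Finset.sup_le fun a' _ => hus a' a
  have hV' : ∀ b, V ≤ v b + Q := fun b => Finset.sup_le fun b' _ => hvs b' b
  have hVU : ∀ a, V ≤ P + Q - u a := fun a => Finset.sup_le fun b _ => by
    have := huv a b
    omega
  have hUV : U ≤ P + Q - V := Finset.sup_le fun a _ => by
    have := hVU a
    have := huv a a
    omega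
  have hV'' : V ≤ P + Q := Finset.sup_le fun b _ => (Nat.le_add_left _ _).trans (huv b b)
  -- moving `t` from the columns to the rows puts the columns in `[0, Q]`; moving `s` back then
  -- puts the rows in `[0, P]`
  set t := V - Q
  set s := U + t - P
  rw [hankelDet_congr x (u' := fun a => u a + t - s) (v' := fun b => v b + s - t) fun a b => by
    have := hU' a
    have := hV' b
    omega]
  refine hbox ⟨_, _, fun a => ?_, fun b => ?_, rfl⟩
  · have := hU a
    omega
  · have := hV b
    have := hV' b
    omega

theorem hankelDet_mem_of_col_spread_le (hbox : boxHankelDets x k P Q ⊆ I) (hP : k ≤ P + 1)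
    (u v : Fin k → ℕ) (huv : ∀ a b, u a + v b ≤ P + Q) (hvs : ∀ b b', v b ≤ v b' + Q) :
    hankelDet x u v ∈ I := by
  induction hw : binWeight u using Nat.strong_induction_on generalizing u v with
  | _ w ih =>
  refine hankelDet_mem_of_sorted x fun σ τ hu _ => ?_
  have huv' : ∀ a b, (u ∘ σ) a + (v ∘ τ) b ≤ P + Q := fun a b => huv (σ a) (τ b)
  have hvs' : ∀ b b', (v ∘ τ) b ≤ (v ∘ τ) b' + Q := fun b b' => hvs (τ b) (τ b')
  by_cases hus : ∀ a a', (u ∘ σ) a ≤ (u ∘ σ) a' + P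
  · exact hankelDet_mem_of_spreads_le hbox hus hvs' huv'
  obtain ⟨j, hj, hgap⟩ := exists_gap hu hP hus
  have hvQ : ∀ b, (v ∘ τ) b + 1 ≤ Q := by
    push Not at hus
    obtain ⟨a, a', ha⟩ := hus
    intro b
    have := huv' a b
    omega
  have hvu : ∀ b a, (v ∘ τ) b + (u ∘ σ) a ≤ P + Q := fun b a => (add_comm _ _).trans_le (huv' a b)
  have hw' : binWeight (u ∘ σ) = w := by rw [binWeight_comp_perm, hw]
  rw [hankelDet_comm]
  refine hankelDet_mem_of_lowerTop x hu j (fun A => ?_) (fun B hB => ?_) <;> rw [hankelDet_comm]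
  · refine ih _ (hw' ▸ binWeight_lowerTop_lt hu hj) _ _ (fun a b => ?_) (fun b b' => ?_) rfl
    · have := bump_add_lowerTop_le hu hj hvu A b a
      omega
    · have := bump_le (v ∘ τ) A b
      have := hvQ b
      omega
  · refine ih _ (hw' ▸ binWeight_bump_lowerTop_lt hu hgap hB) _ _ (fun a b => ?_) hvs' rfl
    have := add_bump_lowerTop_le hu hj hvu B b a
    omega

theorem hankelDet_mem_of_add_le (hbox : boxHankelDets x k P Q ⊆ I) (hP : k ≤ P + 1)
    (hQ : k ≤ Q + 1) (u v : Fin k → ℕ) (huv : ∀ a b, u a + v b ≤ P + Q) :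
    hankelDet x u v ∈ I := by
  induction hw : binWeight v using Nat.strong_induction_on generalizing u v with
  | _ w ih =>
  refine hankelDet_mem_of_sorted x fun σ τ _ hv => ?_
  have huv' : ∀ a b, (u ∘ σ) a + (v ∘ τ) b ≤ P + Q := fun a b => huv (σ a) (τ b)
  by_cases hvs : ∀ b b', (v ∘ τ) b ≤ (v ∘ τ) b' + Q
  · exact hankelDet_mem_of_col_spread_le hbox hP _ _ huv' hvs
  obtain ⟨j, hj, hgap⟩ := exists_gap hv hQ hvs
  have hw' : binWeight (v ∘ τ) = w := by rw [binWeight_comp_perm, hw]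
  refine hankelDet_mem_of_lowerTop x hv j (fun A => ?_) (fun B hB => ?_)
  · exact ih _ (hw' ▸ binWeight_lowerTop_lt hv hj) _ _ (bump_add_lowerTop_le hv hj huv' A) rfl
  · exact ih _ (hw' ▸ binWeight_bump_lowerTop_lt hv hgap hB) _ _
      (add_bump_lowerTop_le hv hj huv' B) rfl

theorem span_boxHankelDets (x : ℕ → R) (hP : k ≤ P + 1) (hQ : k ≤ Q + 1) :
    Ideal.span (boxHankelDets x k P Q) = hankelIdeal x k (P + Q) := by
  refine le_antisymm (Ideal.span_mono ?_) (Ideal.span_le.mpr ?_)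
  · rintro _ ⟨u, v, hu, hv, rfl⟩
    exact ⟨u, v, fun a b => add_le_add (hu a) (hv b), rfl⟩
  · rintro _ ⟨u, v, huv, rfl⟩
    exact hankelDet_mem_of_add_le Ideal.subset_span hP hQ u v huv

end Reduction

section Toeplitz

variable {n : ℕ} {h : ℕ → R} {c : ℕ} {hc1 : 1 ≤ c} {hcn : c ≤ n}

theorem Ac_apply (i : Fin (n - c + 1)) (j : Fin c) :
    Ac n h c hc1 hcn i j = h (n - c - i + j + 1) := by
  have := i.isLt
  have := j.isLt
  simp only [Ac, Toep, submatrix_apply, of_apply]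
  rw [if_pos (by omega)]
  congr 1
  omega

theorem det_submatrix_Ac (f : Fin k → Fin (n - c + 1)) (g : Fin k → Fin c) :
    ((Ac n h c hc1 hcn).submatrix f g).det
      = hankelDet (fun m => h (m + 1)) (fun a => n - c - f a) (fun b => g b) := by
  rw [hankelDet]
  congr 1
  ext a b
  rw [submatrix_apply, Ac_apply, of_apply]

theorem span_minorsSet_Ac :
    Ideal.span (minorsSet (Ac n h c hc1 hcn) k)
      = Ideal.span (boxHankelDets (fun m => h (m + 1)) k (n - c) (c - 1)) := by
  refine le_antisymm (Ideal.span_mono ?_) (Ideal.span_le.mpr ?_)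
  · rintro _ ⟨f, g, -, -, rfl⟩
    exact ⟨_, _, fun a => Nat.sub_le _ _, fun b => Nat.le_sub_one_of_lt (g b).isLt,
      (det_submatrix_Ac f g).symm⟩
  · rintro _ ⟨u, v, hu, hv, rfl⟩
    refine hankelDet_mem_of_sorted _ fun σ τ hσ hτ => ?_
    -- the Hankel row index `n - c - i` decreases along the rows `i` of `A_c`
    rw [← (Ideal.span _).unit_mul_mem_iff_mem (isUnit_sign_cast Fin.revPerm),
      ← hankelDet_comp_perm_left]
    refine Ideal.subset_span ⟨fun a => ⟨n - c - u (σ (Fin.rev a)), by omega⟩,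
      fun b => ⟨v (τ b), by have := hv (τ b); omega⟩, fun a a' haa' => ?_,
      fun b b' hbb' => Fin.mk_lt_mk.mpr (hτ hbb'), ?_⟩
    · have : u (σ (Fin.rev a')) < u (σ (Fin.rev a)) := hσ (Fin.rev_lt_rev.mpr haa')
      have := hu (σ (Fin.rev a))
      exact Fin.mk_lt_mk.mpr (by omega)
    · rw [det_submatrix_Ac]
      refine hankelDet_congr _ fun a b => ?_
      have := hu (σ (Fin.rev a))
      simp only [Function.comp_apply, Fin.revPerm_apply]
      omega

end Toeplitz

end

theorem stmt5 {R : Type*} [CommRing R]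
    (n : ℕ) (h : ℕ → R) (k c : ℕ) (hk : 1 ≤ k) (hkc : k ≤ c) (hcn : 2 * c ≤ n) :
    Ideal.span (minorsSet (Ac n h c (by omega) (by omega)) k)
      = Ideal.span (minorsSet (Ac n h k (by omega) (by omega)) k) := by
  rw [span_minorsSet_Ac, span_minorsSet_Ac, span_boxHankelDets _ (by omega) (by omega),
    span_boxHankelDets _ (by omega) (by omega)]
  congr 1
  omega
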